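/- Let G be a block graph of order p and diameter d(G) ≥ 2. Then rn(G) ≥ (p−1)(d(G)+ε(G)) − 2L(G) + ε(G). -/

import Mathlib

/-!
List the vertices `x₀, …, x_{p-1}` of `G` in the order of their labels under an optimal radio
labeling. Each gap `f(x_{k+1}) - f(x_k)` is at least `d + 1 - d(x_k, x_{k+1})`, and in a block
graph `d(u, v) ≤ L(u) + L(v) + 1 - ε`: two central vertices coincide when `ε = 1`, and lie in the
central block, a clique, when `ε = 0`. Summing the gaps gives a span of at least
`(p - 1)(d + ε) - 2 L(G) + L(x₀) + L(x_{p-1})`, and `L(x₀) + L(x_{p-1}) ≥ ε`.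

That the weight centers lie in one block rests on the fact that an interior vertex `c` of a
geodesic from `u` to `v` separates `u` from `v`: otherwise two internally disjoint paths would
join two vertices of the geodesic at distance at least 2, and their union is 2-connected but no
clique. If two weight centers `u`, `v` were not adjacent, take `c` next to `u` towards `v`; every
vertex has a geodesic from `u` or from `v` through `c`, so one of these two sets holds more than
half of the vertices, and moving from its end to `c` would decrease the weight.
-/

open scoped Classical

namespace RadioLabeling

variable {V : Type*} [Fintype V]

/-- The diameter of a graph: maximum distance between two vertices. -/
noncomputable def diam (G : SimpleGraph V) : ℕ :=
  Finset.univ.sup fun p : V × V => G.dist p.1 p.2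

/-- A vertex set `S` induces a 2-connected subgraph: the induced subgraph is connected
and contains no cut-vertex. -/
def TwoConn (G : SimpleGraph V) (S : Set V) : Prop :=
  (G.induce S).Connected ∧ ∀ v ∈ S, (S \ {v} : Set V) = ∅ ∨ (G.induce (S \ {v})).Connected

/-- A block: a maximal 2-connected induced subgraph. -/
def IsBlock (G : SimpleGraph V) (S : Set V) : Prop :=
  TwoConn G S ∧ ∀ T : Set V, S ⊆ T → TwoConn G T → T = S

/-- A block graph: a connected graph each of whose blocks is a clique. -/
def IsBlockGraph (G : SimpleGraph V) : Prop :=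
  G.Connected ∧ ∀ S : Set V, IsBlock G S → G.IsClique S

/-- The weight of `G` at `v`: the sum of distances from `v` to all vertices. -/
noncomputable def wt (G : SimpleGraph V) (v : V) : ℕ := ∑ u : V, G.dist u v

/-- The set of weight centers: vertices minimizing the weight. -/
def weightCenters (G : SimpleGraph V) : Set V := {v | ∀ u : V, wt G v ≤ wt G u}

/-- `nCloser G v u` = number of vertices strictly closer to `v` than to `u`. -/
noncomputable def nCloser (G : SimpleGraph V) (v u : V) : ℕ :=
  (Finset.univ.filter fun z => G.dist v z < G.dist u z).card

/-- A central vertex: either the unique weight center, or (when there are at least two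
weight centers) a vertex of the central block, i.e. of a block containing all weight centers. -/
def IsCentral (G : SimpleGraph V) (w : V) : Prop :=
  weightCenters G = {w} ∨
    (2 ≤ (weightCenters G).ncard ∧
      ∃ S : Set V, IsBlock G S ∧ weightCenters G ⊆ S ∧ w ∈ S)

/-- The level of a vertex: its distance to a nearest central vertex. -/
noncomputable def level (G : SimpleGraph V) (v : V) : ℕ :=
  sInf {n | ∃ w, IsCentral G w ∧ G.dist v w = n}

/-- The total level of `G`. -/
noncomputable def totalLevel (G : SimpleGraph V) : ℕ := ∑ v : V, level G v

/-- `eps G = 1` if `G` has a unique weight center, `0` otherwise. -/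
noncomputable def eps (G : SimpleGraph V) : ℕ :=
  if (weightCenters G).ncard = 1 then 1 else 0

/-- A radio labeling: `|f u - f v| ≥ diam G + 1 - dist u v` for all distinct `u`, `v`. -/
def IsRadioLabeling (G : SimpleGraph V) (f : V → ℕ) : Prop :=
  ∀ u v : V, u ≠ v → diam G + 1 ≤ G.dist u v + max (f u - f v) (f v - f u)

/-- The span of a labeling: the maximum difference of two labels. -/
noncomputable def span (f : V → ℕ) : ℕ :=
  Finset.univ.sup fun p : V × V => f p.1 - f p.2

/-- The radio number: minimum span of a radio labeling. -/
noncomputable def rn (G : SimpleGraph V) : ℕ :=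
  sInf {s | ∃ f : V → ℕ, IsRadioLabeling G f ∧ span f = s}

/-- `G` achieves the lower bound `(p-1)(d(G)+ε(G)) - 2L(G) + ε(G)` for the radio number. -/
def lbEq (G : SimpleGraph V) : Prop :=
  (rn G : ℤ) =
    ((Fintype.card V : ℤ) - 1) * ((diam G : ℤ) + (eps G : ℤ)) -
      2 * (totalLevel G : ℤ) + (eps G : ℤ)

/-- A lower bound block graph: a block graph whose radio number equals the lower bound. -/
def IsLowerBoundBlockGraph (G : SimpleGraph V) : Prop := IsBlockGraph G ∧ lbEq G

/-- `x` lies on a `(u,v)`-geodesic. -/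
def OnGeodesic (G : SimpleGraph V) (x u v : V) : Prop :=
  G.dist u v = G.dist u x + G.dist x v

/-- `x` is an ancestor of `v` (and `v` a descendent of `x`): `x` lies on the geodesic
from some central vertex to `v`. -/
def IsAncestor (G : SimpleGraph V) (x v : V) : Prop :=
  ∃ w : V, IsCentral G w ∧ OnGeodesic G x w v

/-- `phi G u v`: the maximum level of a common ancestor of `u` and `v`. -/
noncomputable def phi (G : SimpleGraph V) (u v : V) : ℕ :=
  sSup {n | ∃ x, IsAncestor G x u ∧ IsAncestor G x v ∧ level G x = n}

/-- `delta G u v = 1` iff the `(u,v)`-geodesic contains two central vertices. -/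
noncomputable def delta (G : SimpleGraph V) (u v : V) : ℕ :=
  if ∃ x y : V, x ≠ y ∧ IsCentral G x ∧ IsCentral G y ∧
      OnGeodesic G x u v ∧ OnGeodesic G y u v
    then 1 else 0

/-- `rho G u v = 0` iff the `(u,v)`-geodesic contains a central vertex or a common
ancestor of `u` and `v`. -/
noncomputable def rho (G : SimpleGraph V) (u v : V) : ℕ :=
  if ∃ x : V, OnGeodesic G x u v ∧
      (IsCentral G x ∨ (IsAncestor G x u ∧ IsAncestor G x v))
    then 0 else 1

/-- The central block: a block containing at least two weight centers, all of them. -/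
def IsCentralBlock (G : SimpleGraph V) (D : Set V) : Prop :=
  IsBlock G D ∧ 2 ≤ (weightCenters G).ncard ∧ weightCenters G ⊆ D

/-- `v` belongs to the branch of `G` determined by the non-central block `D` adjacent to the
central vertex `w`: `v` is a vertex of `D` other than `w`, or a descendent of such a vertex. -/
def InBranch (G : SimpleGraph V) (w : V) (D : Set V) (v : V) : Prop :=
  IsCentral G w ∧ IsBlock G D ∧ w ∈ D ∧ ¬ IsCentralBlock G D ∧
    ∃ u ∈ D, u ≠ w ∧ IsAncestor G u v

/-- Two vertices are in different branches: branches induced by two different blocks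
adjacent to the same central vertex. -/
def DifferentBranches (G : SimpleGraph V) (u v : V) : Prop :=
  ∃ w D₁ D₂, D₁ ≠ D₂ ∧ InBranch G w D₁ u ∧ InBranch G w D₂ v

/-- Two vertices are in opposite branches: branches induced by blocks adjacent to two
different central vertices. -/
def OppositeBranches (G : SimpleGraph V) (u v : V) : Prop :=
  ∃ w₁ w₂ D₁ D₂, w₁ ≠ w₂ ∧ InBranch G w₁ D₁ u ∧ InBranch G w₂ D₂ v

/-- Two vertices lie in the same branch. -/
def SameBranch (G : SimpleGraph V) (u v : V) : Prop :=
  ∃ w D, InBranch G w D u ∧ InBranch G w D v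

end RadioLabeling

namespace SimpleGraph

variable {V : Type*} {G : SimpleGraph V} {s : Set V} {u v w x y : V}

lemma preconnected_induce_of_forall_walk (u : V)
    (h : ∀ v ∈ s, ∃ p : G.Walk u v, ∀ z ∈ p.support, z ∈ s) : (G.induce s).Preconnected := by
  have reach : ∀ (a : V) (ha : a ∈ s), ∃ hu : u ∈ s, (G.induce s).Reachable ⟨u, hu⟩ ⟨a, ha⟩ :=
    fun a ha => by
      obtain ⟨p, hp⟩ := h a ha
      exact ⟨hp u p.start_mem_support, ⟨p.induce s hp⟩⟩
  rintro ⟨a, ha⟩ ⟨b, hb⟩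
  obtain ⟨hu, hua⟩ := reach a ha
  obtain ⟨_, hub⟩ := reach b hb
  exact hua.symm.trans hub

namespace Walk

lemma IsPath.eq_of_mem_takeUntil_of_mem_dropUntil {p : G.Walk u v} (hp : p.IsPath)
    (hw : w ∈ p.support) (hx₁ : x ∈ (p.takeUntil w hw).support)
    (hx₂ : x ∈ (p.dropUntil w hw).support) : x = w := by
  have hnodup := hp.support_nodup
  rw [← p.take_spec hw, support_append, List.nodup_append] at hnodup
  rw [← cons_tail_support (p.dropUntil w hw)] at hx₂
  rcases List.mem_cons.1 hx₂ with rfl | hx₂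
  · rfl
  · exact absurd rfl (hnodup.2.2 x hx₁ x hx₂)

lemma mem_support_takeUntil_or_dropUntil (p : G.Walk u v) (hw : w ∈ p.support)
    (hx : x ∈ p.support) : x ∈ (p.takeUntil w hw).support ∨ x ∈ (p.dropUntil w hw).support := by
  rwa [← p.take_spec hw, mem_support_append_iff] at hx

lemma IsPath.not_mem_support_dropUntil {p : G.Walk u v} (hp : p.IsPath)
    (hw : w ∈ p.support) (hx : x ∈ (p.takeUntil w hw).support) (hxw : x ≠ w) :
    x ∉ (p.dropUntil w hw).support :=
  fun hx' => hxw (hp.eq_of_mem_takeUntil_of_mem_dropUntil hw hx hx')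

lemma IsPath.end_not_mem_support_takeUntil {p : G.Walk u v} (hp : p.IsPath)
    (hw : w ∈ p.support) (hwv : w ≠ v) : v ∉ (p.takeUntil w hw).support :=
  fun hv => hwv (hp.eq_of_mem_takeUntil_of_mem_dropUntil hw hv (end_mem_support _)).symm

/- Every vertex reaches `x` along `P` or `Q`; a vertex of `P` cut off from `x` by `w` goes
round through `y` and `Q`, which is why `w` may meet `Q` only in `y`. -/
lemma preconnected_induce_support_union_diff {P Q : G.Walk x y} (hP : P.IsPath)
    (hQ : Q.IsPath) (hwQ : w ∈ Q.support → w = y) :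
    (G.induce ({z | z ∈ P.support ∨ z ∈ Q.support} \ {w})).Preconnected := by
  have hQw : ∀ a (ha : a ∈ Q.support), a ≠ w → w ∉ (Q.takeUntil a ha).support :=
    fun a ha haw hw => by
      have hwy := hwQ (support_takeUntil_subset_support Q ha hw)
      exact hQ.end_not_mem_support_takeUntil ha (hwy ▸ haw) (hwy ▸ hw)
  refine preconnected_induce_of_forall_walk x fun a ⟨ha, haw⟩ => ?_
  replace haw : a ≠ w := haw
  rcases ha with ha | ha
  · by_cases hwa : w ∈ (P.takeUntil a ha).support
    · have hwd := hP.not_mem_support_dropUntil ha hwa haw.symm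
      refine ⟨Q.append (P.dropUntil a ha).reverse, fun z hz => ?_⟩
      rw [mem_support_append_iff, support_reverse, List.mem_reverse] at hz
      rcases hz with hz | hz
      · refine ⟨Or.inr hz, fun (hzw : z = w) => ?_⟩
        rw [hwQ (hzw ▸ hz)] at hwd
        exact hwd (end_mem_support _)
      · exact ⟨Or.inl (support_dropUntil_subset_support P ha hz), fun hzw => hwd (hzw ▸ hz)⟩
    · exact ⟨P.takeUntil a ha, fun z hz =>
        ⟨Or.inl (support_takeUntil_subset_support P ha hz), fun hzw => hwa (hzw ▸ hz)⟩⟩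
  · exact ⟨Q.takeUntil a ha, fun z hz =>
      ⟨Or.inr (support_takeUntil_subset_support Q ha hz), fun hzw => hQw a ha haw (hzw ▸ hz)⟩⟩

lemma preconnected_induce_support_union_diff_singleton {P Q : G.Walk x y} (hP : P.IsPath)
    (hQ : Q.IsPath) (hPQ : ∀ a ∈ P.support, a ∈ Q.support → a = x ∨ a = y) (w : V) :
    (G.induce ({z | z ∈ P.support ∨ z ∈ Q.support} \ {w})).Preconnected := by
  by_cases hwQ : w ∈ Q.support → w = y
  · exact preconnected_induce_support_union_diff hP hQ hwQ
  obtain ⟨hwQ, hwy⟩ := Classical.not_imp.1 hwQ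
  by_cases hwx : w = x
  · have hS : {z | z ∈ P.reverse.support ∨ z ∈ Q.reverse.support} =
        {z | z ∈ P.support ∨ z ∈ Q.support} := by ext; simp
    rw [← hS]
    exact preconnected_induce_support_union_diff hP.reverse hQ.reverse fun _ => hwx
  · have hwP : w ∉ P.support := fun hw => (hPQ w hw hwQ).elim hwx hwy
    rw [show {z | z ∈ P.support ∨ z ∈ Q.support} = {z | z ∈ Q.support ∨ z ∈ P.support} by
      ext; exact or_comm]
    exact preconnected_induce_support_union_diff hQ hP fun hw => absurd hw hwP

lemma connected_induce_support_union (P Q : G.Walk x y) :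
    (G.induce {z | z ∈ P.support ∨ z ∈ Q.support}).Connected := by
  rw [connected_iff]
  refine ⟨preconnected_induce_of_forall_walk x fun a ha => ?_, ⟨x, Or.inl P.start_mem_support⟩⟩
  rcases ha with ha | ha
  · exact ⟨P.takeUntil a ha, fun z hz => Or.inl (support_takeUntil_subset_support P ha hz)⟩
  · exact ⟨Q.takeUntil a ha, fun z hz => Or.inr (support_takeUntil_subset_support Q ha hz)⟩

lemma dist_add_dist_of_mem_support {p : G.Walk u v} (hp : p.length = G.dist u v)
    (hw : w ∈ p.support) : G.dist u w + G.dist w v = G.dist u v := by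
  rw [← length_eq_dist_of_subwalk hp (p.isSubwalk_takeUntil hw),
    ← length_eq_dist_of_subwalk hp (p.isSubwalk_dropUntil hw), ← length_append, take_spec, hp]

lemma mem_support_dropUntil_of_dist_le {p : G.Walk u v} (hp : p.length = G.dist u v)
    (hx : x ∈ p.support) (hy : y ∈ p.support) (hxy : G.dist u x ≤ G.dist u y) :
    y ∈ (p.dropUntil x hx).support := by
  rcases p.mem_support_takeUntil_or_dropUntil hx hy with hy' | hy'
  · have hux := length_eq_dist_of_subwalk hp (p.isSubwalk_takeUntil hx)
    have := dist_add_dist_of_mem_support hux hy'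
    have hyx : y = x :=
      (((p.takeUntil x hx).dropUntil y hy').reachable.dist_eq_zero_iff).1 (by omega)
    rw [hyx]
    exact start_mem_support _
  · exact hy'

lemma dist_eq_dist_add_dist_of_dist_le {p : G.Walk u v} (hp : p.length = G.dist u v)
    (hx : x ∈ p.support) (hy : y ∈ p.support) (hxy : G.dist u x ≤ G.dist u y) :
    G.dist u y = G.dist u x + G.dist x y := by
  have hy' := mem_support_dropUntil_of_dist_le hp hx hy hxy
  have := dist_add_dist_of_mem_support
    (length_eq_dist_of_subwalk hp (p.isSubwalk_dropUntil hx)) hy'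
  have := dist_add_dist_of_mem_support hp hx
  have := dist_add_dist_of_mem_support hp hy
  omega

lemma eq_of_dist_eq {p : G.Walk u v} (hp : p.length = G.dist u v) (hx : x ∈ p.support)
    (hy : y ∈ p.support) (hxy : G.dist u x = G.dist u y) : x = y := by
  have := dist_eq_dist_add_dist_of_dist_le hp hx hy hxy.le
  exact ((p.dropUntil x hx).takeUntil y (mem_support_dropUntil_of_dist_le hp hx hy hxy.le)
    |>.reachable.dist_eq_zero_iff).1 (by omega)

end Walk

end SimpleGraph

namespace RadioLabeling

open scoped Finset

open SimpleGraph

variable {V : Type*} {G : SimpleGraph V} {S B₁ B₂ : Set V} {u v x y c : V}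

lemma twoConn_iff : TwoConn G S ↔
    (G.induce S).Connected ∧ ∀ v, (G.induce (S \ {v})).Preconnected := by
  refine ⟨fun ⟨hS, hdel⟩ => ⟨hS, fun v => ?_⟩, fun ⟨hS, hdel⟩ => ⟨hS, fun v _ => ?_⟩⟩
  · by_cases hv : v ∈ S
    · rcases hdel v hv with h | h
      · rintro ⟨a, ha⟩; simp [h] at ha
      · exact h.preconnected
    · rw [Set.sdiff_singleton_eq_self hv]
      exact hS.preconnected
  · rcases (S \ {v}).eq_empty_or_nonempty with h | ⟨a, ha⟩
    · exact Or.inl h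
    · exact Or.inr (connected_iff _ |>.2 ⟨hdel v, ⟨⟨a, ha⟩⟩⟩)

lemma twoConn_of_isClique (hS : G.IsClique S) (hne : S.Nonempty) : TwoConn G S := by
  have key : ∀ T ⊆ S, (G.induce T).Preconnected := fun T hT => by
    rw [induce_eq_top.2 (hS.subset hT)]
    exact preconnected_top
  exact twoConn_iff.2 ⟨connected_iff _ |>.2 ⟨key S le_rfl, hne.to_subtype⟩,
    fun v => key _ Set.sdiff_subset⟩

lemma exists_isBlock_superset [Finite V] (hS : TwoConn G S) : ∃ B, IsBlock G B ∧ S ⊆ B := by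
  obtain ⟨B, hSB, hB⟩ := Finite.exists_le_maximal (p := TwoConn G) hS
  exact ⟨B, ⟨hB.1, fun T hBT hT => (hB.2 hT hBT).antisymm hBT⟩, hSB⟩

lemma IsBlockGraph.isClique_of_twoConn [Finite V] (hG : IsBlockGraph G) (hS : TwoConn G S) :
    G.IsClique S := by
  obtain ⟨B, hB, hSB⟩ := exists_isBlock_superset hS
  exact (hG.2 B hB).subset hSB

lemma IsBlock.eq_of_mem_of_mem (hB₁ : IsBlock G B₁) (hB₂ : IsBlock G B₂) (hab : x ≠ y)
    (hx₁ : x ∈ B₁) (hx₂ : x ∈ B₂) (hy₁ : y ∈ B₁) (hy₂ : y ∈ B₂) : B₁ = B₂ := by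
  obtain ⟨hc₁, hd₁⟩ := twoConn_iff.1 hB₁.1
  obtain ⟨hc₂, hd₂⟩ := twoConn_iff.1 hB₂.1
  have hunion : TwoConn G (B₁ ∪ B₂) := by
    refine twoConn_iff.2 ⟨induce_union_connected hc₁.preconnected hc₂.preconnected
      ⟨x, hx₁, hx₂⟩, fun v => ?_⟩
    obtain ⟨c, hc₁, hc₂, hcv⟩ : ∃ c ∈ B₁, c ∈ B₂ ∧ c ≠ v := by
      by_cases hxv : x = v
      · exact ⟨y, hy₁, hy₂, hxv ▸ hab.symm⟩
      · exact ⟨x, hx₁, hx₂, hxv⟩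
    rw [Set.union_sdiff_distrib]
    exact (induce_union_connected (hd₁ v) (hd₂ v) ⟨c, ⟨hc₁, hcv⟩, ⟨hc₂, hcv⟩⟩).preconnected
  exact (hB₁.2 _ Set.subset_union_left hunion).symm.trans (hB₂.2 _ Set.subset_union_right hunion)

lemma IsBlockGraph.adj_of_internally_disjoint [Finite V] {P Q : G.Walk x y} (hG : IsBlockGraph G)
    (hP : P.IsPath) (hQ : Q.IsPath) (hPQ : ∀ a ∈ P.support, a ∈ Q.support → a = x ∨ a = y)
    (hxy : x ≠ y) : G.Adj x y :=
  hG.isClique_of_twoConn (twoConn_iff.2 ⟨P.connected_induce_support_union Q,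
      P.preconnected_induce_support_union_diff_singleton hP hQ hPQ⟩)
    (Or.inl P.start_mem_support) (Or.inl P.end_mem_support) hxy

lemma IsBlockGraph.dist_le_one_of_avoids_between [Finite V] (hG : IsBlockGraph G)
    {P : G.Walk u v} (hP : P.length = G.dist u v) (hx : x ∈ P.support) (hy : y ∈ P.support)
    (hxy : G.dist u x ≤ G.dist u y) (R : G.Walk x y)
    (hR : ∀ t ∈ P.support, t ∈ R.support → G.dist u t ≤ G.dist u x ∨ G.dist u y ≤ G.dist u t) :
    G.dist x y ≤ 1 := by
  have hconn := hG.1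
  have hy' := P.mem_support_dropUntil_of_dist_le hP hx hy hxy
  set seg := (P.dropUntil x hx).takeUntil y hy'
  have hseg : seg.length = G.dist x y := length_eq_dist_of_subwalk hP
    (((P.dropUntil x hx).isSubwalk_takeUntil hy').trans (P.isSubwalk_dropUntil hx))
  have huy := P.dist_eq_dist_add_dist_of_dist_le hP hx hy hxy
  by_cases hxy' : x = y
  · simp [hxy']
  refine (G.dist_eq_one_iff_adj.2 (hG.adj_of_internally_disjoint
    (seg.isPath_of_length_eq_dist hseg) R.bypass_isPath (fun t ht htR => ?_) hxy')).le
  have htP : t ∈ P.support :=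
    P.support_dropUntil_subset_support hx (Walk.support_takeUntil_subset_support _ hy' ht)
  have hxty := Walk.dist_add_dist_of_mem_support hseg ht
  have h₁ : G.dist u t ≤ G.dist u x + G.dist x t := hconn.dist_triangle
  have h₂ : G.dist u y ≤ G.dist u t + G.dist t y := hconn.dist_triangle
  rcases hR t htP (R.support_bypass_subset_support htR) with h | h
  · exact Or.inl ((hconn.dist_eq_zero_iff.1 (by omega : G.dist x t = 0)).symm)
  · exact Or.inr (hconn.dist_eq_zero_iff.1 (by omega : G.dist t y = 0))

lemma IsBlockGraph.mem_support_of_mem_support_geodesic [Finite V] (hG : IsBlockGraph G)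
    {P : G.Walk u v} (hP : P.length = G.dist u v) (hc : c ∈ P.support) (hcu : c ≠ u)
    (hcv : c ≠ v) (W : G.Walk u v) : c ∈ W.support := by
  by_contra hcW
  -- `x` and `y`: the vertices of `W` on `P` closest to `c` before and after it
  set T := P.support.toFinset.filter (· ∈ W.support)
  obtain ⟨x, hxT, hxmax⟩ := (T.filter fun t => G.dist u t < G.dist u c).exists_max_image
    (G.dist u) ⟨u, by simp [T, hG.1.pos_dist_of_ne hcu.symm]⟩
  obtain ⟨y, hyT, hymin⟩ := (T.filter fun t => G.dist u c < G.dist u t).exists_min_image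
    (G.dist u) ⟨v, by
      have := P.dist_add_dist_of_mem_support hP hc
      have := hG.1.pos_dist_of_ne hcv
      simp only [T, Finset.mem_filter, List.mem_toFinset]
      exact ⟨⟨P.end_mem_support, W.end_mem_support⟩, by omega⟩⟩
  simp only [T, Finset.mem_filter, List.mem_toFinset] at hxT hyT hxmax hymin
  have hcx := P.dist_eq_dist_add_dist_of_dist_le hP hxT.1.1 hc hxT.2.le
  have hcy := P.dist_eq_dist_add_dist_of_dist_le hP hc hyT.1.1 hyT.2.le
  have := hG.dist_le_one_of_avoids_between hP hxT.1.1 hyT.1.1 (by omega)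
    ((W.takeUntil x hxT.1.2).reverse.append (W.takeUntil y hyT.1.2)) fun t htP htR => by
      have htW : t ∈ W.support := by
        rw [Walk.mem_support_append_iff, Walk.support_reverse, List.mem_reverse] at htR
        exact htR.elim (fun h => W.support_takeUntil_subset_support _ h)
          (fun h => W.support_takeUntil_subset_support _ h)
      rcases lt_trichotomy (G.dist u t) (G.dist u c) with h | h | h
      · exact Or.inl (hxmax t ⟨⟨htP, htW⟩, h⟩)
      · exact absurd (P.eq_of_dist_eq hP htP hc h ▸ htW) hcW
      · exact Or.inr (hymin t ⟨⟨htP, htW⟩, h⟩)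
  have := hG.1.pos_dist_of_ne (u := x) (v := c) (by rintro rfl; omega)
  have := hG.1.pos_dist_of_ne (u := c) (v := y) (by rintro rfl; omega)
  have := P.dist_eq_dist_add_dist_of_dist_le hP hxT.1.1 hyT.1.1 (by omega)
  omega

lemma IsBlockGraph.dist_eq_add_or_dist_eq_add [Finite V] (hG : IsBlockGraph G) (hcu : c ≠ u)
    (hcv : c ≠ v) (hc : G.dist u c + G.dist c v = G.dist u v) (z : V) :
    G.dist u z = G.dist u c + G.dist c z ∨ G.dist v z = G.dist v c + G.dist c z := by
  obtain ⟨A, hA⟩ := hG.1.exists_walk_length_eq_dist u c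
  obtain ⟨B, hB⟩ := hG.1.exists_walk_length_eq_dist c v
  obtain ⟨P, hP⟩ := hG.1.exists_walk_length_eq_dist u z
  obtain ⟨Q, hQ⟩ := hG.1.exists_walk_length_eq_dist v z
  have hcPQ := hG.mem_support_of_mem_support_geodesic (P := A.append B)
    (by rw [Walk.length_append, hA, hB, hc]) (Walk.mem_support_append_iff _ _ |>.2
      (Or.inr B.start_mem_support)) hcu hcv (P.append Q.reverse)
  rw [Walk.mem_support_append_iff, Walk.support_reverse, List.mem_reverse] at hcPQ
  exact hcPQ.imp (fun h => (P.dist_add_dist_of_mem_support hP h).symm)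
    (fun h => (Q.dist_add_dist_of_mem_support hQ h).symm)

section

variable [Fintype V]

lemma two_mul_card_le_of_mem_weightCenters (hconn : G.Connected) (hu : u ∈ weightCenters G)
    (hcu : c ≠ u) :
    2 * #{z | G.dist u z = G.dist u c + G.dist c z} ≤ Fintype.card V := by
  set A : Finset V := {z | G.dist u z = G.dist u c + G.dist c z}
  set d := G.dist u c
  have hd : 0 < d := hconn.pos_dist_of_ne hcu.symm
  -- moving from `u` to `c` brings each vertex of `A` closer by `d`, and no vertex farther than `d`
  have key : ∀ z, G.dist c z + 2 * d * (if z ∈ A then 1 else 0) ≤ G.dist u z + d := fun z => by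
    have : G.dist c z ≤ G.dist c u + G.dist u z := hconn.dist_triangle
    have := G.dist_comm (u := c) (v := u)
    split_ifs with hz
    · simp only [A, Finset.mem_filter, Finset.mem_univ, true_and] at hz
      omega
    · omega
  have hsum := Finset.sum_le_sum fun z (_ : z ∈ Finset.univ) => key z
  rw [Finset.sum_add_distrib, Finset.sum_add_distrib, ← Finset.mul_sum, ← Finset.card_filter,
    Finset.filter_mem_eq_inter, Finset.univ_inter, Finset.sum_const, Finset.card_univ,
    smul_eq_mul] at hsum
  have hwt : wt G u ≤ wt G c := hu c
  simp only [wt, G.dist_comm (v := u), G.dist_comm (v := c)] at hwt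
  have : d * (2 * #A) ≤ d * Fintype.card V := by linarith
  exact Nat.le_of_mul_le_mul_left this hd

lemma IsBlockGraph.adj_of_mem_weightCenters (hG : IsBlockGraph G) (hu : u ∈ weightCenters G)
    (hv : v ∈ weightCenters G) (huv : u ≠ v) : G.Adj u v := by
  by_contra hadj
  obtain ⟨p, hp⟩ := hG.1.exists_walk_length_eq_dist u v
  have hc : G.Adj u p.snd := p.adj_snd (Walk.not_nil_of_ne huv)
  have hcu : p.snd ≠ u := hc.ne'
  have hcv : p.snd ≠ v := fun h => hadj (h ▸ hc)
  have hbet : G.dist u p.snd + G.dist p.snd v = G.dist u v :=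
    p.dist_add_dist_of_mem_support hp (p.getVert_mem_support 1)
  set A : Finset V := {z | G.dist u z = G.dist u p.snd + G.dist p.snd z}
  set B : Finset V := {z | G.dist v z = G.dist v p.snd + G.dist p.snd z}
  have hA : 2 * #A ≤ Fintype.card V := two_mul_card_le_of_mem_weightCenters hG.1 hu hcu
  have hB : 2 * #B ≤ Fintype.card V := two_mul_card_le_of_mem_weightCenters hG.1 hv hcv
  have hAB : A ∪ B = Finset.univ := Finset.eq_univ_of_forall fun z => by
    simpa [A, B] using hG.dist_eq_add_or_dist_eq_add hcu hcv hbet z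
  have hcAB : 0 < #(A ∩ B) := Finset.card_pos.2 ⟨p.snd, by simp [A, B]⟩
  have := Finset.card_union_add_card_inter A B
  rw [hAB, Finset.card_univ] at this
  omega

lemma weightCenters_nonempty [Nonempty V] (G : SimpleGraph V) : (weightCenters G).Nonempty := by
  obtain ⟨w, -, hw⟩ := Finset.univ.exists_min_image (wt G) Finset.univ_nonempty
  exact ⟨w, fun u => hw u (Finset.mem_univ u)⟩

lemma IsBlockGraph.exists_isCentral [Nonempty V] (hG : IsBlockGraph G) : ∃ w, IsCentral G w := by
  obtain ⟨w, hw⟩ := weightCenters_nonempty G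
  by_cases h1 : (weightCenters G).ncard = 1
  · obtain ⟨w', hw'⟩ := Set.ncard_eq_one.1 h1
    exact ⟨w', Or.inl hw'⟩
  have h2 : 2 ≤ (weightCenters G).ncard := by
    have := (Set.ncard_pos (Set.toFinite _)).2 ⟨w, hw⟩
    omega
  obtain ⟨B, hB, hWB⟩ := exists_isBlock_superset (twoConn_of_isClique
    (fun _ ha _ hb hab => hG.adj_of_mem_weightCenters ha hb hab) ⟨w, hw⟩)
  exact ⟨w, Or.inr ⟨h2, B, hB, hWB, hWB hw⟩⟩

lemma IsBlockGraph.dist_add_eps_le_one (hG : IsBlockGraph G) (hx : IsCentral G x)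
    (hy : IsCentral G y) : G.dist x y + eps G ≤ 1 := by
  unfold eps
  split_ifs with h1
  · have hsingle : ∀ z, IsCentral G z → weightCenters G = {z} := by
      rintro z (hz | ⟨h2, -⟩)
      · exact hz
      · omega
    rw [Set.singleton_eq_singleton_iff.1 ((hsingle x hx).symm.trans (hsingle y hy)),
      SimpleGraph.dist_self]
  · obtain hx | ⟨h2, Sx, hSx, hWx, hxS⟩ := hx
    · simp [hx] at h1
    obtain hy | ⟨-, Sy, hSy, hWy, hyS⟩ := hy
    · simp [hy] at h1
    obtain ⟨a, b, ha, hb, hab⟩ := (Set.one_lt_ncard_iff (Set.toFinite (weightCenters G))).1 h2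
    rw [hSx.eq_of_mem_of_mem hSy hab (hWx ha) (hWy ha) (hWx hb) (hWy hb)] at hxS
    by_cases hxy : x = y
    · simp [hxy]
    · simpa using (G.dist_eq_one_iff_adj.2 (hG.2 Sy hSy hxS hyS hxy)).le

lemma IsBlockGraph.exists_isCentral_dist_eq_level [Nonempty V] (hG : IsBlockGraph G) (v : V) :
    ∃ w, IsCentral G w ∧ G.dist v w = level G v := by
  obtain ⟨w, hw⟩ := hG.exists_isCentral
  exact Nat.sInf_mem (s := {n | ∃ w, IsCentral G w ∧ G.dist v w = n}) ⟨_, w, hw, rfl⟩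

lemma IsBlockGraph.dist_add_eps_le_level_add_level (hG : IsBlockGraph G) (u v : V) :
    G.dist u v + eps G ≤ level G u + level G v + 1 := by
  have : Nonempty V := ⟨u⟩
  obtain ⟨x, hx, hux⟩ := hG.exists_isCentral_dist_eq_level u
  obtain ⟨y, hy, hvy⟩ := hG.exists_isCentral_dist_eq_level v
  have h₁ : G.dist u v ≤ G.dist u x + G.dist x v := hG.1.dist_triangle
  have h₂ : G.dist x v ≤ G.dist x y + G.dist y v := hG.1.dist_triangle
  have := hG.dist_add_eps_le_one hx hy
  rw [G.dist_comm (u := y)] at h₂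
  omega

lemma IsBlockGraph.eps_le_level_add_level (hG : IsBlockGraph G) (huv : u ≠ v) :
    eps G ≤ level G u + level G v := by
  have := hG.dist_add_eps_le_level_add_level u v
  have := hG.1.pos_dist_of_ne huv
  omega

lemma dist_le_diam (G : SimpleGraph V) (u v : V) : G.dist u v ≤ diam G :=
  Finset.le_sup (f := fun p : V × V => G.dist p.1 p.2) (Finset.mem_univ (u, v))

lemma one_lt_card_of_diam_pos {G : SimpleGraph V} (h : 0 < diam G) : 1 < Fintype.card V := by
  obtain ⟨⟨u, v⟩, -, huv⟩ := Finset.lt_sup_iff.1 h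
  exact Fintype.one_lt_card_iff.2 ⟨u, v, fun h => by simp [h] at huv⟩

lemma sub_le_span (f : V → ℕ) (u v : V) : f u - f v ≤ span f :=
  Finset.le_sup (f := fun p : V × V => f p.1 - f p.2) (Finset.mem_univ (u, v))

lemma IsRadioLabeling.injective {f : V → ℕ} (hf : IsRadioLabeling G f) : Function.Injective f :=
  fun u v huv => by
    by_contra hne
    have := hf u v hne
    rw [huv, Nat.sub_self, max_self] at this
    have := dist_le_diam G u v
    omega

lemma isRadioLabeling_diam_add_one_mul {g : V → ℕ} (hg : Function.Injective g) :
    IsRadioLabeling G fun v => (diam G + 1) * g v := fun u v huv => by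
  dsimp only
  rcases Nat.lt_or_gt_of_ne (hg.ne huv) with h | h <;>
  · have := Nat.mul_le_mul_left (diam G + 1) (Nat.succ_le_of_lt h)
    rw [Nat.mul_succ] at this
    omega

lemma exists_isRadioLabeling_span_eq_rn (G : SimpleGraph V) :
    ∃ f, IsRadioLabeling G f ∧ span f = rn G :=
  Nat.sInf_mem (s := {s | ∃ f, IsRadioLabeling G f ∧ span f = s}) ⟨_, _,
    isRadioLabeling_diam_add_one_mul
    (Fin.val_injective.comp (Fintype.equivFin V).injective), rfl⟩

lemma IsRadioLabeling.diam_add_eps_add_le (hG : IsBlockGraph G) {f : V → ℕ}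
    (hf : IsRadioLabeling G f) (huv : u ≠ v) (hle : f u ≤ f v) :
    diam G + eps G + f u ≤ f v + level G u + level G v := by
  have := hf u v huv
  have := hG.dist_add_eps_le_level_add_level u v
  rw [Nat.sub_eq_zero_of_le hle, max_eq_right (Nat.zero_le _)] at *
  omega

end

lemma exists_equiv_fin_strictMono {α : Type*} [Fintype α] {f : α → ℕ}
    (hf : Function.Injective f) {k : ℕ} (hk : Fintype.card α = k) :
    ∃ e : Fin k ≃ α, StrictMono (f ∘ e) := by
  let _ : LinearOrder α := LinearOrder.lift' f hf
  exact ⟨(Fintype.orderIsoFinOfCardEq α hk).toEquiv,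
    (Fintype.orderIsoFinOfCardEq α hk).strictMono⟩

lemma lower_bound_of_consecutive_gaps (c : ℤ) :
    ∀ (m : ℕ) (g ℓ : Fin (m + 1) → ℤ),
    (∀ k : Fin m, c - ℓ k.castSucc - ℓ k.succ ≤ g k.succ - g k.castSucc) →
    m * c - 2 * ∑ i, ℓ i + ℓ 0 + ℓ (Fin.last m) ≤ g (Fin.last m) - g 0
  | 0, g, ℓ, _ => by simp; omega
  | m + 1, g, ℓ, h => by
    have ih := lower_bound_of_consecutive_gaps c m (g ∘ Fin.castSucc) (ℓ ∘ Fin.castSucc)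
      fun k => by simpa only [Function.comp, Fin.succ_castSucc] using h k.castSucc
    have hlast := h (Fin.last m)
    simp only [Function.comp, Fin.castSucc_zero, Fin.succ_last] at ih hlast
    rw [Fin.sum_univ_castSucc]
    push_cast
    linarith

/-- For a block graph `G` of order `p` and diameter at least 2,
`rn(G) ≥ (p-1)(d(G)+ε(G)) - 2L(G) + ε(G)`. -/
theorem stmt4 {V : Type*} [Fintype V] (G : SimpleGraph V) (hG : IsBlockGraph G)
    (hd : 2 ≤ diam G) :
    ((Fintype.card V : ℤ) - 1) * ((diam G : ℤ) + (eps G : ℤ))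
        - 2 * (totalLevel G : ℤ) + (eps G : ℤ) ≤ (rn G : ℤ) := by
  obtain ⟨f, hf, hspan⟩ := exists_isRadioLabeling_span_eq_rn G
  have hcard := one_lt_card_of_diam_pos (G := G) (by omega)
  obtain ⟨m, hm⟩ : ∃ m, Fintype.card V = m + 1 := ⟨_, (Nat.sub_add_cancel hcard.le).symm⟩
  obtain ⟨e, he⟩ := exists_equiv_fin_strictMono hf.injective hm
  have hgaps := lower_bound_of_consecutive_gaps (diam G + eps G) m (fun i => f (e i))
    (fun i => level G (e i)) fun k => by
      have := hf.diam_add_eps_add_le hG (e.injective.ne k.castSucc_lt_succ.ne)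
        (he k.castSucc_lt_succ).le
      omega
  have h0 : (0 : Fin (m + 1)) ≠ Fin.last m := Fin.ext_iff.not.2 (by simp; omega)
  have hends : (eps G : ℤ) ≤ level G (e 0) + level G (e (Fin.last m)) := by
    exact_mod_cast hG.eps_le_level_add_level (e.injective.ne h0)
  have hL : ∑ i, (level G (e i) : ℤ) = totalLevel G := by
    rw [totalLevel, Nat.cast_sum]
    exact e.sum_comp fun v => (level G v : ℤ)
  have hrn : (f (e (Fin.last m)) : ℤ) - f (e 0) ≤ rn G := by
    have := sub_le_span f (e (Fin.last m)) (e 0)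
    omega
  rw [hm]
  push_cast
  linarith

end RadioLabeling
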